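/- arXiv:2507.03566 — 3 statements merged into one kernel-verified Lean document; each statement's English description precedes it below -/
import Mathlib

section
/- Let f : ℝⁿ → ℝ be differentiable, τ > 0, λ > 0, and x ∈ ℝⁿ. Then x ∈ Prox_{τλ‖·‖₀}(x − τ∇f(x)) if and only if: for all i with x_i ≠ 0, ∇_i f(x) = 0 and |x_i| ≥ sqrt(2τλ); and for all i with x_i = 0, |∇_i f(x)| ≤ sqrt(2λ/τ). -/
open Classical Finset

noncomputable def norm0 {n : ℕ} (x : EuclideanSpace ℝ (Fin n)) : ℕ :=
  (Finset.univ.filter fun i => x i ≠ 0).card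

noncomputable def Fobj (τ lam c t : ℝ) : ℝ :=
  (1 / (2 * τ)) * (t - c) ^ 2 + lam * (if t = 0 then 0 else 1)

lemma coord_min_iff (τ lam : ℝ) (hτ : 0 < τ) (hlam : 0 < lam) (c t0 : ℝ) :
    (∀ t, Fobj τ lam c t0 ≤ Fobj τ lam c t) ↔
      ((t0 ≠ 0 → t0 = c ∧ Real.sqrt (2 * τ * lam) ≤ |t0|) ∧
        (t0 = 0 → |c| ≤ Real.sqrt (2 * τ * lam))) := by
  have hs : (0:ℝ) ≤ 2 * τ * lam := by positivity
  have hsq : Real.sqrt (2 * τ * lam) ^ 2 = 2 * τ * lam := Real.sq_sqrt hs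
  have hsnn := Real.sqrt_nonneg (2 * τ * lam)
  have h1τ : (0:ℝ) < 1 / (2 * τ) := by positivity
  have hdl : 1 / (2 * τ) * (2 * τ * lam) = lam := by field_simp
  constructor
  · intro h
    constructor
    · intro ht0
      have hc : t0 = c := by
        by_cases hc0 : c = 0
        · exfalso
          have h2 := h (t0 / 2)
          have hne : t0 / 2 ≠ 0 := by
            intro hh; apply ht0; field_simp at hh; linarith
          simp only [Fobj, hc0, ht0, hne, if_false, ite_false, sub_zero] at h2
          have h5 : 1 / (2 * τ) * t0 ^ 2 ≤ 1 / (2 * τ) * (t0 / 2) ^ 2 := by linarith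
          have h4 : t0 ^ 2 ≤ (t0 / 2) ^ 2 := le_of_mul_le_mul_left h5 h1τ
          have ht2 : 0 < t0 ^ 2 := by positivity
          nlinarith
        · have h2 := h c
          simp only [Fobj, ht0, hc0, if_false, ite_false, sub_self] at h2
          have h5 : 1 / (2 * τ) * (t0 - c) ^ 2 ≤ 1 / (2 * τ) * (c - c) ^ 2 := by linarith
          have h4 : (t0 - c) ^ 2 ≤ (c - c) ^ 2 := le_of_mul_le_mul_left h5 h1τ
          nlinarith [sq_nonneg (t0 - c)]
      refine ⟨hc, ?_⟩
      have h2 := h 0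
      simp only [Fobj, ht0, if_false, ite_false, ite_true, sub_zero, mul_zero, add_zero,
        mul_one] at h2
      rw [hc] at h2 ⊢
      have e1 : (c - c) ^ 2 = (0:ℝ) := by ring
      have e2 : (0 - c) ^ 2 = c ^ 2 := by ring
      rw [e1, e2, mul_zero, zero_add] at h2
      have h5 : 1 / (2 * τ) * (2 * τ * lam) ≤ 1 / (2 * τ) * c ^ 2 := by rw [hdl]; exact h2
      have hcsq : 2 * τ * lam ≤ c ^ 2 := le_of_mul_le_mul_left h5 h1τ
      calc Real.sqrt (2 * τ * lam) ≤ Real.sqrt (c ^ 2) := Real.sqrt_le_sqrt hcsq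
        _ = |c| := Real.sqrt_sq_eq_abs c
    · intro ht0
      by_cases hc0 : c = 0
      · simp [hc0, hsnn]
      · have h2 := h c
        simp only [Fobj, ht0, hc0, if_false, ite_false, ite_true, sub_self, mul_zero,
          add_zero, mul_one] at h2
        have e2 : (0 - c) ^ 2 = c ^ 2 := by ring
        have e3 : ((0:ℝ)) ^ 2 = 0 := by ring
        rw [e2] at h2
        have h5 : 1 / (2 * τ) * c ^ 2 ≤ 1 / (2 * τ) * (2 * τ * lam) := by
          rw [hdl]; nlinarith [sq_nonneg (c - c)]
        have hcsq : c ^ 2 ≤ 2 * τ * lam := le_of_mul_le_mul_left h5 h1τ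
        calc |c| = Real.sqrt (c ^ 2) := (Real.sqrt_sq_eq_abs c).symm
          _ ≤ Real.sqrt (2 * τ * lam) := Real.sqrt_le_sqrt hcsq
  · rintro ⟨h1, h2⟩ t
    by_cases ht0 : t0 = 0
    · subst ht0
      have hcb := h2 rfl
      have hcsq : c ^ 2 ≤ 2 * τ * lam := by
        nlinarith [mul_self_le_mul_self (abs_nonneg c) hcb, sq_abs c, hsq]
      by_cases ht : t = 0
      · subst ht; exact le_refl _
      · simp only [Fobj, ht, if_false, ite_false, ite_true, mul_zero, add_zero, mul_one,
          zero_sub]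
        have h5 : 1 / (2 * τ) * c ^ 2 ≤ lam := by
          rw [← hdl]; exact mul_le_mul_of_nonneg_left hcsq (le_of_lt h1τ)
        have h6 : 0 ≤ 1 / (2 * τ) * (t - c) ^ 2 := by positivity
        nlinarith [h5, h6]
    · obtain ⟨hc, hb⟩ := h1 ht0
      have hcsq : 2 * τ * lam ≤ t0 ^ 2 := by
        nlinarith [mul_self_le_mul_self hsnn hb, sq_abs t0, hsq]
      subst hc
      have h5 : lam ≤ 1 / (2 * τ) * t0 ^ 2 := by
        rw [← hdl]; exact mul_le_mul_of_nonneg_left hcsq (le_of_lt h1τ)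
      by_cases ht : t = 0
      · subst ht
        simp only [Fobj, ht0, if_false, ite_false, ite_true, sub_self, zero_sub, mul_zero,
          add_zero, mul_one]
        nlinarith [h5]
      · simp only [Fobj, ht0, ht, if_false, ite_false, sub_self]
        have h6 : 0 ≤ 1 / (2 * τ) * (t - t0) ^ 2 := by positivity
        nlinarith [h6]

lemma obj_eq {n : ℕ} (τ lam : ℝ) (hτ : 0 < τ)
    (z u : EuclideanSpace ℝ (Fin n)) :
    (1 / (2 * τ)) * ‖u - z‖ ^ 2 + lam * (norm0 u : ℝ) =
      ∑ i, Fobj τ lam (z i) (u i) := by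
  have hnorm : ‖u - z‖ ^ 2 = ∑ i, (u i - z i) ^ 2 := by
    rw [EuclideanSpace.norm_eq, Real.sq_sqrt (by positivity)]
    congr 1; funext i
    simp [Real.norm_eq_abs, sq_abs]
  have hcard : (norm0 u : ℝ) = ∑ i, (if u i = 0 then (0:ℝ) else 1) := by
    unfold norm0
    rw [Finset.card_filter]
    push_cast
    congr 1; funext i
    by_cases h : u i = 0 <;> simp [h]
  rw [hnorm, hcard, Finset.mul_sum, Finset.mul_sum, ← Finset.sum_add_distrib]
  rfl

/-- Componentwise characterization of the fixed-point inclusion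
`x ∈ Prox_{τλ‖·‖₀}(x − τ∇f(x))` (τ-stationarity). -/
theorem stmt2 {n : ℕ} (f : EuclideanSpace ℝ (Fin n) → ℝ)
    (g : EuclideanSpace ℝ (Fin n)) (x : EuclideanSpace ℝ (Fin n))
    (τ lam : ℝ) (hτ : 0 < τ) (hlam : 0 < lam)
    (hg : HasGradientAt f g x) :
    (∀ u : EuclideanSpace ℝ (Fin n),
        (1 / (2 * τ)) * ‖x - (x - τ • g)‖ ^ 2 + lam * (norm0 x : ℝ) ≤
          (1 / (2 * τ)) * ‖u - (x - τ • g)‖ ^ 2 + lam * (norm0 u : ℝ)) ↔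
      ((∀ i, x i ≠ 0 → g i = 0 ∧ Real.sqrt (2 * τ * lam) ≤ |x i|) ∧
        (∀ i, x i = 0 → τ * |g i| ≤ Real.sqrt (2 * τ * lam))) := by
  set z : EuclideanSpace ℝ (Fin n) := x - τ • g with hz
  have hzi : ∀ i, z i = x i - τ * g i := by
    intro i; simp [hz]
  -- Step 1: global minimality ↔ per-coordinate minimality
  have key : (∀ u : EuclideanSpace ℝ (Fin n),
      (1 / (2 * τ)) * ‖x - z‖ ^ 2 + lam * (norm0 x : ℝ) ≤
        (1 / (2 * τ)) * ‖u - z‖ ^ 2 + lam * (norm0 u : ℝ)) ↔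
      ∀ i, ∀ t, Fobj τ lam (z i) (x i) ≤ Fobj τ lam (z i) t := by
    constructor
    · intro h i t
      have hu := h (WithLp.toLp 2 (Function.update x i t))
      rw [obj_eq τ lam hτ, obj_eq τ lam hτ] at hu
      simp only [WithLp.ofLp_toLp] at hu
      have hfun : (fun j => Fobj τ lam (z j) (Function.update x i t j)) =
          Function.update (fun j => Fobj τ lam (z j) (x j)) i (Fobj τ lam (z i) t) := by
        funext j
        by_cases hji : j = i
        · subst hji; simp
        · simp [Function.update_of_ne hji]
      rw [hfun, Finset.sum_update_of_mem (Finset.mem_univ i)] at hu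
      rw [← Finset.sum_erase_add Finset.univ _ (Finset.mem_univ i)] at hu
      simp only [Finset.sdiff_singleton_eq_erase] at hu
      linarith
    · intro h u
      rw [obj_eq τ lam hτ, obj_eq τ lam hτ]
      exact Finset.sum_le_sum fun i _ => h i (u i)
  rw [key]
  -- Step 2: translate each coordinate
  constructor
  · intro h
    constructor
    · intro i hxi
      have := (coord_min_iff τ lam hτ hlam (z i) (x i)).mp (h i)
      obtain ⟨hc, hb⟩ := this.1 hxi
      rw [hzi] at hc
      have hg0 : g i = 0 := by
        have : τ * g i = 0 := by linarith
        rcases mul_eq_zero.mp this with h' | h'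
        · exact absurd h' (ne_of_gt hτ)
        · exact h'
      exact ⟨hg0, hb⟩
    · intro i hxi
      have := (coord_min_iff τ lam hτ hlam (z i) (x i)).mp (h i)
      have hb := this.2 hxi
      have he : |z i| = τ * |g i| := by
        rw [hzi, hxi, zero_sub, abs_neg, abs_mul, abs_of_pos hτ]
      rw [← he]; exact hb
  · rintro ⟨h1, h2⟩ i
    apply (coord_min_iff τ lam hτ hlam (z i) (x i)).mpr
    constructor
    · intro hxi
      obtain ⟨hg0, hb⟩ := h1 i hxi
      refine ⟨?_, hb⟩
      rw [hzi, hg0]; ring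
    · intro hxi
      have hb := h2 i hxi
      have he : |z i| = τ * |g i| := by
        rw [hzi, hxi, zero_sub, abs_neg, abs_mul, abs_of_pos hτ]
      rw [he]; exact hb
end

section
/- Let f be convex and differentiable on ℝⁿ. If x is a τ-stationary point of f(x) + λ‖x‖₀ for some τ > 0, then x is a local minimizer of f(x) + λ‖x‖₀. -/
open Classical Finset

open scoped RealInnerProductSpace

/-!
Near a τ-stationary point `x`, every `y` keeps the support of `x`, since the nonzero entries of
`x` are at least `√(2τλ)` in size. By convexity `f y ≥ f x + ⟪∇f x, y - x⟫`, and the gradient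
vanishes on the support of `x`, so only the `k` coordinates that `y` newly switches on
contribute; each contributes at least `-(√(2τλ)/τ) ‖y - x‖ ≥ -λ` once `y` is close enough.
The loss `≥ -λk` in `f` is paid for by the gain `λk` in `λ‖·‖₀`.
-/

section Convexity

variable {E : Type*} [NormedAddCommGroup E] [NormedSpace ℝ E] {f : E → ℝ} {S : Set E}
  {x y : E}

theorem ConvexOn.apply_add_le_of_hasFDerivAt (hf : ConvexOn ℝ S f) (hx : x ∈ S) (hy : y ∈ S)
    {f' : E →L[ℝ] ℝ} (hf' : HasFDerivAt f f' x) : f x + f' (y - x) ≤ f y := by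
  set φ : ℝ → ℝ := fun t => f (AffineMap.lineMap x y t)
  have hφ : ConvexOn ℝ (Set.Icc 0 1) φ :=
    (hf.comp_affineMap (AffineMap.lineMap x y)).subset
      (fun _ ht => hf.1.lineMap_mem hx hy ht) (convex_Icc 0 1)
  have hφ' : HasDerivAt φ (f' (y - x)) 0 :=
    (AffineMap.lineMap_apply_zero (k := ℝ) x y ▸ hf').comp_hasDerivAt 0 AffineMap.hasDerivAt_lineMap
  have hslope := hφ.le_slope_of_hasDerivAt (by simp) (by simp) one_pos hφ'
  simp only [slope_def_field, φ, AffineMap.lineMap_apply_one, AffineMap.lineMap_apply_zero,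
    sub_zero, div_one] at hslope
  linarith

theorem ConvexOn.apply_add_inner_le_of_hasGradientAt {F : Type*} [NormedAddCommGroup F]
    [InnerProductSpace ℝ F] [CompleteSpace F] {f : F → ℝ} {S : Set F} {x y g : F}
    (hf : ConvexOn ℝ S f) (hx : x ∈ S) (hy : y ∈ S) (hg : HasGradientAt f g x) :
    f x + ⟪g, y - x⟫ ≤ f y := by
  simpa using hf.apply_add_le_of_hasFDerivAt hx hy hg.hasFDerivAt

end Convexity

section Coordinates

variable {ι : Type*} [Fintype ι] {x y g : EuclideanSpace ℝ ι}

theorem EuclideanSpace.apply_ne_zero_of_norm_sub_lt {r : ℝ} (hx : ∀ i, x i ≠ 0 → r ≤ |x i|)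
    (hxy : ‖y - x‖ < r) : ∀ i, x i ≠ 0 → y i ≠ 0 := by
  intro i hi hyi
  have := PiLp.norm_apply_le (y - x) i
  simp only [PiLp.sub_apply, hyi, zero_sub, norm_neg, Real.norm_eq_abs] at this
  linarith [hx i hi]

theorem EuclideanSpace.neg_mul_card_le_inner {c : ℝ} (hg₀ : ∀ i, x i ≠ 0 → g i = 0)
    (hgc : ∀ i, x i = 0 → |g i| ≤ c) :
    -(c * ‖y - x‖ * #{i | x i = 0 ∧ y i ≠ 0}) ≤ ⟪g, y - x⟫ := by
  have hinner : ⟪g, y - x⟫ = ∑ i ∈ {i | x i = 0 ∧ y i ≠ 0}, g i * y i := by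
    rw [PiLp.inner_apply, ← Finset.sum_subset (Finset.subset_univ _)]
    · refine Finset.sum_congr rfl fun i hi => ?_
      simp [(Finset.mem_filter.mp hi).2.1, mul_comm]
    · intro i _ hi
      by_cases hxi : x i = 0
      · simp_all
      · simp [hg₀ i hxi]
  have hterm : ∀ i ∈ ({i | x i = 0 ∧ y i ≠ 0} : Finset ι), -(c * ‖y - x‖) ≤ g i * y i := by
    intro i hi
    have hxi := (Finset.mem_filter.mp hi).2.1
    have hyi : |y i| ≤ ‖y - x‖ := by
      simpa [hxi] using PiLp.norm_apply_le (y - x) i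
    have := hgc i hxi
    calc -(c * ‖y - x‖) ≤ -(|g i| * |y i|) :=
          neg_le_neg (mul_le_mul this hyi (abs_nonneg _) ((abs_nonneg _).trans this))
      _ ≤ g i * y i := by rw [← abs_mul]; exact neg_abs_le _
  rw [hinner]
  simpa [mul_comm] using Finset.card_nsmul_le_sum _ _ _ hterm

end Coordinates

theorem norm0_add_card_eq {n : ℕ} {x y : EuclideanSpace ℝ (Fin n)}
    (h : ∀ i, x i ≠ 0 → y i ≠ 0) : norm0 x + #{i | x i = 0 ∧ y i ≠ 0} = norm0 y := by
  have hsplit := Finset.card_filter_add_card_filter_not (s := {i | y i ≠ 0}) (fun i => x i ≠ 0)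
  rw [Finset.filter_filter, Finset.filter_filter] at hsplit
  rw [norm0, norm0, ← hsplit]
  congr 1 <;> exact congrArg Finset.card (Finset.filter_congr fun i _ => by have := h i; tauto)

theorem ConvexOn.add_mul_norm0_le {n : ℕ} {f : EuclideanSpace ℝ (Fin n) → ℝ}
    {x y g : EuclideanSpace ℝ (Fin n)} {lam r c : ℝ} (hf : ConvexOn ℝ Set.univ f)
    (hg : HasGradientAt f g x) (hx : ∀ i, x i ≠ 0 → g i = 0 ∧ r ≤ |x i|)
    (hgc : ∀ i, x i = 0 → |g i| ≤ c) (hxy : ‖y - x‖ < r) (hc : c * ‖y - x‖ ≤ lam) :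
    f x + lam * norm0 x ≤ f y + lam * norm0 y := by
  have hsupp := EuclideanSpace.apply_ne_zero_of_norm_sub_lt (fun i hi => (hx i hi).2) hxy
  have hcard : (norm0 x : ℝ) + #{i | x i = 0 ∧ y i ≠ 0} = norm0 y :=
    mod_cast norm0_add_card_eq hsupp
  have hconv := hf.apply_add_inner_le_of_hasGradientAt trivial trivial hg (y := y)
  have hinner := EuclideanSpace.neg_mul_card_le_inner (y := y) (fun i hi => (hx i hi).1) hgc
  have hloss := mul_le_mul_of_nonneg_right hc (Nat.cast_nonneg (α := ℝ) #{i | x i = 0 ∧ y i ≠ 0})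
  rw [← hcard]
  linarith

/-- For convex differentiable `f`, a τ-stationary point of `f + λ‖·‖₀` is a
local minimizer of `f + λ‖·‖₀`. -/
theorem stmt5 {n : ℕ} (f : EuclideanSpace ℝ (Fin n) → ℝ)
    (G : EuclideanSpace ℝ (Fin n) → EuclideanSpace ℝ (Fin n))
    (lam τ : ℝ) (hlam : 0 < lam) (hτ : 0 < τ)
    (hgrad : ∀ x, HasGradientAt f (G x) x)
    (hconv : ConvexOn ℝ Set.univ f)
    (x : EuclideanSpace ℝ (Fin n))
    (hstat1 : ∀ i, x i ≠ 0 → G x i = 0 ∧ Real.sqrt (2 * τ * lam) ≤ |x i|)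
    (hstat2 : ∀ i, x i = 0 → τ * |G x i| ≤ Real.sqrt (2 * τ * lam)) :
    ∃ ε > 0, ∀ y : EuclideanSpace ℝ (Fin n), ‖y - x‖ < ε →
      f x + lam * (norm0 x : ℝ) ≤ f y + lam * (norm0 y : ℝ) := by
  set s := Real.sqrt (2 * τ * lam)
  have hs : 0 < s := Real.sqrt_pos.mpr (by positivity)
  refine ⟨min s (lam * τ / s), by positivity, fun y hy => ?_⟩
  have hgc : ∀ i, x i = 0 → |G x i| ≤ s / τ := fun i hi => by
    rw [le_div_iff₀ hτ, mul_comm]; exact hstat2 i hi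
  refine hconv.add_mul_norm0_le (hgrad x) hstat1 hgc (hy.trans_le (min_le_left _ _)) ?_
  calc s / τ * ‖y - x‖ ≤ s / τ * (lam * τ / s) := by
        gcongr; exact (hy.trans_le (min_le_right _ _)).le
    _ = lam := by field_simp
end

section
/- Suppose f : ℝⁿ → ℝ is differentiable, x* satisfies ∇_i f(x*) = 0 for all i in T* := supp(x*), and f is strongly convex with modulus ℓ* > 0 on the ball N(x*) = {x : ‖x − x*‖ < ε*}, where ε* := min{ λ/(2‖∇_{T̄*} f(x*)‖), min_{i∈T*} |x*_i| } (with the first term interpreted as +∞ if ∇_{T̄*} f(x*) = 0). Then for every x ∈ N(x*) with x ≠ x*, f(x) + λ‖x‖₀ > f(x*) + λ‖x*‖₀; i.e., x* is a strict (isolated) local minimizer of f + λ‖·‖₀. -/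
/-! Inside the ball the support of `x*` can only grow, since `ε*` is below every `|x*_i|`, `i ∈ T*`.
If it does not grow, `∇f(x*)` is orthogonal to `x - x*` and strong convexity alone gives the strict
gap. If it grows, `‖·‖₀` gains at least `λ`, while the linear term of the strong convexity
inequality only sees `∇_{T̄*} f(x*)` and loses at most `‖∇_{T̄*} f(x*)‖ ε* ≤ λ/2`. -/

open Classical Finset

section Support

variable {ι : Type*} {y z v : EuclideanSpace ℝ ι}

theorem apply_ne_zero_of_dist_lt [Fintype ι] {ε : ℝ} (hε : ∀ i, y i ≠ 0 → ε ≤ |y i|)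
    (hz : dist z y < ε) {i : ι} (hi : y i ≠ 0) : z i ≠ 0 := by
  intro hzi
  have : dist (z i) (y i) ≤ dist z y := PiLp.dist_apply_le z y i
  rw [hzi, Real.dist_eq, zero_sub, abs_neg] at this
  linarith [hε i hi]

theorem toLp_ite_eq_self (hv : ∀ i, y i ≠ 0 → v i = 0) :
    (WithLp.toLp 2 fun i => if y i = 0 then v i else 0 : EuclideanSpace ℝ ι) = v := by
  ext i
  by_cases hi : y i = 0
  · simp [hi]
  · simp [hi, hv i hi]

theorem inner_sub_eq_zero_of_support_subset [Fintype ι] (hv : ∀ i, y i ≠ 0 → v i = 0)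
    (hzy : ∀ i, y i = 0 → z i = 0) : inner ℝ v (z - y) = 0 := by
  simp only [PiLp.inner_apply, RCLike.inner_apply, conj_trivial]
  refine Finset.sum_eq_zero fun i _ => ?_
  by_cases hi : y i = 0
  · simp [hi, hzy i hi]
  · simp [hv i hi]

end Support

section norm0

variable {n : ℕ} {y z : EuclideanSpace ℝ (Fin n)}

theorem norm0_eq_of_forall_ne_zero_iff (h : ∀ i, y i ≠ 0 ↔ z i ≠ 0) : norm0 y = norm0 z := by
  unfold norm0
  exact congrArg Finset.card (Finset.filter_congr fun i _ => h i)

theorem norm0_lt_of_support_ssubset (h : ∀ i, y i ≠ 0 → z i ≠ 0) {j : Fin n} (hyj : y j = 0)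
    (hzj : z j ≠ 0) : norm0 y < norm0 z := by
  refine Finset.card_lt_card ⟨fun i hi => ?_, fun hsub => ?_⟩
  · simp only [Finset.mem_filter, Finset.mem_univ, true_and] at hi ⊢
    exact h i hi
  · simpa [hyj] using hsub (by simpa using hzj : j ∈ Finset.univ.filter fun i => z i ≠ 0)

end norm0

theorem stmt6_general {n : ℕ} (f : EuclideanSpace ℝ (Fin n) → ℝ)
    (G : EuclideanSpace ℝ (Fin n) → EuclideanSpace ℝ (Fin n))
    (lam ℓs εs : ℝ) (hlam : 0 < lam) (hℓs : 0 < ℓs)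
    (xs : EuclideanSpace ℝ (Fin n))
    (hstat : ∀ i, xs i ≠ 0 → G xs i = 0)
    -- `ε* ≤ min_{i ∈ T*} |x*_i|`
    (hε1 : ∀ i, xs i ≠ 0 → εs ≤ |xs i|)
    -- `ε* ≤ λ/(2‖∇_{T̄*} f(x*)‖)` (interpreted as no constraint if that gradient block vanishes)
    (hε2 : 2 * ‖(show EuclideanSpace ℝ (Fin n) from
        WithLp.toLp 2 fun i => if xs i = 0 then G xs i else 0)‖ * εs ≤ lam)
    -- local strong convexity with modulus `ℓ*` on `N(x*)`
    (hconv : ∀ x z : EuclideanSpace ℝ (Fin n), ‖x - xs‖ < εs → ‖z - xs‖ < εs →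
      f x + (inner ℝ (G x) (z - x) : ℝ) + (ℓs / 2) * ‖z - x‖ ^ 2 ≤ f z) :
    ∀ x : EuclideanSpace ℝ (Fin n), ‖x - xs‖ < εs → x ≠ xs →
      f xs + lam * (norm0 xs : ℝ) < f x + lam * (norm0 x : ℝ) := by
  intro x hx hne
  have hsupp : ∀ i, xs i ≠ 0 → x i ≠ 0 :=
    fun i => apply_ne_zero_of_dist_lt hε1 (by rwa [dist_eq_norm])
  have hgap := hconv xs x (by simpa using (norm_nonneg _).trans_lt hx) hx
  have hquad : 0 < ℓs / 2 * ‖x - xs‖ ^ 2 := by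
    have := norm_pos_iff.mpr (sub_ne_zero.mpr hne)
    positivity
  by_cases hsame : ∀ i, xs i = 0 → x i = 0
  · have hinner := inner_sub_eq_zero_of_support_subset hstat hsame
    have hcard := norm0_eq_of_forall_ne_zero_iff fun i => ⟨hsupp i, mt (hsame i)⟩
    rw [hcard]
    linarith
  · push Not at hsame
    obtain ⟨j, hxsj, hxj⟩ := hsame
    have hcard : (norm0 xs : ℝ) + 1 ≤ norm0 x := by
      exact_mod_cast norm0_lt_of_support_ssubset hsupp hxsj hxj
    rw [toLp_ite_eq_self hstat] at hε2
    have hinner : -(lam / 2) ≤ inner ℝ (G xs) (x - xs) := by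
      have := neg_le_of_abs_le (abs_real_inner_le_norm (G xs) (x - xs))
      linarith [mul_le_mul_of_nonneg_left hx.le (norm_nonneg (G xs))]
    linarith [mul_le_mul_of_nonneg_left hcard hlam.le]

/-- If `∇_{T*} f(x*) = 0` and `f` is strongly convex with modulus `ℓ*` on the ball
of radius `ε* ≤ min{λ/(2‖∇_{T̄*}f(x*)‖), min_{i∈T*}|x*_i|}`, then `x*` is a strict
local minimizer of `f + λ‖·‖₀` on that ball. -/
theorem stmt6 {n : ℕ} (f : EuclideanSpace ℝ (Fin n) → ℝ)
    (G : EuclideanSpace ℝ (Fin n) → EuclideanSpace ℝ (Fin n))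
    (lam ℓs εs : ℝ) (hlam : 0 < lam) (hℓs : 0 < ℓs) (hεs : 0 < εs)
    (xs : EuclideanSpace ℝ (Fin n))
    (hgrad : ∀ x, HasGradientAt f (G x) x)
    (hstat : ∀ i, xs i ≠ 0 → G xs i = 0)
    -- `ε* ≤ min_{i ∈ T*} |x*_i|`
    (hε1 : ∀ i, xs i ≠ 0 → εs ≤ |xs i|)
    -- `ε* ≤ λ/(2‖∇_{T̄*} f(x*)‖)` (interpreted as no constraint if that gradient block vanishes)
    (hε2 : 2 * ‖(show EuclideanSpace ℝ (Fin n) from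
        WithLp.toLp 2 fun i => if xs i = 0 then G xs i else 0)‖ * εs ≤ lam)
    -- local strong convexity with modulus `ℓ*` on `N(x*)`
    (hconv : ∀ x z : EuclideanSpace ℝ (Fin n), ‖x - xs‖ < εs → ‖z - xs‖ < εs →
      f x + (inner ℝ (G x) (z - x) : ℝ) + (ℓs / 2) * ‖z - x‖ ^ 2 ≤ f z) :
    ∀ x : EuclideanSpace ℝ (Fin n), ‖x - xs‖ < εs → x ≠ xs →
      f xs + lam * (norm0 xs : ℝ) < f x + lam * (norm0 x : ℝ) :=
  stmt6_general f G lam ℓs εs hlam hℓs xs hstat hε1 hε2 hconv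
end
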